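/- Let β be a real skew-symmetric ν×ν matrix and let t ∈ ℂ be such that the matrix sin(βt) is invertible. Define q(s) := exp(−iβt(1−s))·sin(βts)·(sin(βt))⁻¹ and r(s) := exp(iβts)·sin(βt(1−s))·(sin(βt))⁻¹ for s ∈ [0,1]. Then q and r both satisfy the ODE q̈(s) = 2iβt·q̇(s) on [0,1], with boundary values q(0) = 0, q(1) = 𝟙 and r(0) = 𝟙, r(1) = 0. (These are the solutions q̃♭_t and q̃♯_t in the magnetic case A = 𝟙, C = 0, B = −(i/2)β, for which E = 2iβ and F = 0.) -/

import Mathlib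

open Matrix Set

attribute [local instance] Matrix.linftyOpNormedAddCommGroup Matrix.linftyOpNormedRing
  Matrix.linftyOpNormedAlgebra

noncomputable section

abbrev Mat (ν : ℕ) := Matrix (Fin ν) (Fin ν) ℂ

/-- The matrix sine, `sin M := (exp(iM) − exp(−iM))/(2i)`. -/
def msin {ν : ℕ} (M : Mat ν) : Mat ν :=
  ((2 : ℂ) * Complex.I)⁻¹ •
    (NormedSpace.exp (Complex.I • M) - NormedSpace.exp (-(Complex.I • M)))

/-!
All matrices involved are functions of `β`, so they commute and
`exp(cβ) sin(dβ) = (exp((c + id)β) − exp((c − id)β))/(2i)`. For `q` one of the two exponents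
is `−itβ` and for `r` it is `itβ`, independent of `s`; the other one is `(2is − i)tβ` in both
cases. Hence `q` and `r` are a constant plus `±(2i)⁻¹ exp((2is − i)tβ)(sin βt)⁻¹`, and such an
`f` satisfies `f' = 2itβ (f − const)`, whence `f'' = 2itβ f'`.
-/

section LinearODE

variable {𝔸 : Type*} [NormedRing 𝔸] [NormedAlgebra ℂ 𝔸]

theorem deriv_deriv_eq_smul_mul_deriv {f : ℝ → 𝔸} {a : ℂ} {M C : 𝔸}
    (hf : ∀ s, HasDerivAt f (a • (M * (f s - C))) s) (s : ℝ) :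
    deriv (deriv f) s = a • (M * deriv f s) := by
  have hderiv : deriv f = fun s => a • (M * (f s - C)) := funext fun s => (hf s).deriv
  rw [hderiv]
  exact ((((hf s).sub_const C).const_mul M).const_smul a).deriv

variable [CompleteSpace 𝔸]

theorem hasDerivAt_exp_affine_smul (a b : ℂ) (M : 𝔸) (x : ℝ) :
    HasDerivAt (fun s : ℝ => NormedSpace.exp ((a * s + b) • M))
      (a • (M * NormedSpace.exp ((a * x + b) • M))) x := by
  have hlin : HasDerivAt (fun s : ℝ => a * (s : ℂ) + b) a x := by
    simpa using (Complex.ofRealCLM.hasDerivAt.const_mul a).add_const b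
  exact (hasDerivAt_exp_smul_const' M _).scomp x hlin

theorem hasDerivAt_const_add_smul_exp_affine_mul (C B M : 𝔸) (a b c : ℂ) (x : ℝ) :
    HasDerivAt (fun s : ℝ => C + c • (NormedSpace.exp ((a * s + b) • M) * B))
      (a • (M * (c • (NormedSpace.exp ((a * x + b) • M) * B)))) x := by
  refine ((((hasDerivAt_exp_affine_smul a b M x).mul_const B).const_smul c).const_add C
    ).congr_deriv ?_
  rw [mul_smul_comm, smul_mul_assoc, smul_comm, mul_assoc]

theorem deriv_deriv_const_add_smul_exp_affine_mul (C B M : 𝔸) (a b c : ℂ) (s : ℝ) :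
    deriv (deriv fun s : ℝ => C + c • (NormedSpace.exp ((a * s + b) • M) * B)) s =
      a • (M * deriv (fun s : ℝ => C + c • (NormedSpace.exp ((a * s + b) • M) * B)) s) :=
  deriv_deriv_eq_smul_mul_deriv (C := C) (fun x => by
    simpa only [add_sub_cancel_left] using hasDerivAt_const_add_smul_exp_affine_mul C B M a b c x) s

end LinearODE

theorem msin_zero {ν : ℕ} : msin (0 : Mat ν) = 0 := by
  simp [msin]

theorem exp_smul_mul_msin_smul_mul {ν : ℕ} (c d : ℂ) (M B : Mat ν) :
    NormedSpace.exp (c • M) * msin (d • M) * B =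
      ((2 : ℂ) * Complex.I)⁻¹ • (NormedSpace.exp ((c + Complex.I * d) • M) * B) -
        ((2 : ℂ) * Complex.I)⁻¹ • (NormedSpace.exp ((c - Complex.I * d) • M) * B) := by
  have hcomm : ∀ x y : ℂ, Commute (x • M) (y • M) := fun x y =>
    ((Commute.refl M).smul_left x).smul_right y
  rw [msin, mul_smul_comm, mul_sub, smul_mul_assoc, sub_mul, smul_sub, smul_smul,
    ← neg_smul]
  -- `erw`: `exp_add_of_commute` multiplies through the normed-ring instance on matrices
  erw [← NormedSpace.exp_add_of_commute (hcomm c (Complex.I * d)),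
    ← NormedSpace.exp_add_of_commute (hcomm c (-(Complex.I * d))), ← add_smul, ← add_smul,
    ← sub_eq_add_neg]
  rfl

theorem statement17_general (ν : ℕ)
    (t : ℂ) (βC : Mat ν)
    (hinv : IsUnit (msin (t • βC)))
    (q r : ℝ → Mat ν)
    (hq : q = fun s : ℝ =>
      NormedSpace.exp ((-(Complex.I * t * (1 - (s : ℂ)))) • βC) *
        msin ((t * (s : ℂ)) • βC) * (msin (t • βC))⁻¹)
    (hr : r = fun s : ℝ =>
      NormedSpace.exp ((Complex.I * t * (s : ℂ)) • βC) *
        msin ((t * (1 - (s : ℂ))) • βC) * (msin (t • βC))⁻¹) :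
    (∀ s ∈ Icc (0 : ℝ) 1,
        deriv (deriv q) s = ((2 : ℂ) * Complex.I * t) • (βC * deriv q s)) ∧
      q 0 = 0 ∧ q 1 = 1 ∧
      (∀ s ∈ Icc (0 : ℝ) 1,
        deriv (deriv r) s = ((2 : ℂ) * Complex.I * t) • (βC * deriv r s)) ∧
      r 0 = 1 ∧ r 1 = 0 := by
  set S := (msin (t • βC))⁻¹
  have hS : msin (t • βC) * S = 1 := mul_nonsing_inv _ ((isUnit_iff_isUnit_det _).mp hinv)
  set k := ((2 : ℂ) * Complex.I)⁻¹
  have hq' : q = fun s : ℝ => -(k • (NormedSpace.exp ((-(Complex.I * t)) • βC) * S)) +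
      k • (NormedSpace.exp ((2 * Complex.I * t * s + -(Complex.I * t)) • βC) * S) := by
    rw [hq]; funext s
    rw [exp_smul_mul_msin_smul_mul, sub_eq_neg_add,
      show -(Complex.I * t * (1 - s)) - Complex.I * (t * s) = -(Complex.I * t) by ring,
      show -(Complex.I * t * (1 - s)) + Complex.I * (t * s) =
        2 * Complex.I * t * s + -(Complex.I * t) by ring]
  have hr' : r = fun s : ℝ => k • (NormedSpace.exp ((Complex.I * t) • βC) * S) +
      (-k) • (NormedSpace.exp ((2 * Complex.I * t * s + -(Complex.I * t)) • βC) * S) := by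
    rw [hr]; funext s
    rw [exp_smul_mul_msin_smul_mul, sub_eq_add_neg, ← neg_smul,
      show Complex.I * t * s + Complex.I * (t * (1 - s)) = Complex.I * t by ring,
      show Complex.I * t * s - Complex.I * (t * (1 - s)) =
        2 * Complex.I * t * s + -(Complex.I * t) by ring]
  refine ⟨fun s _ => ?_, ?_, ?_, fun s _ => ?_, ?_, ?_⟩
  · rw [hq']; exact deriv_deriv_const_add_smul_exp_affine_mul _ _ _ _ _ _ s
  · simp [hq, msin_zero]
  · simp [hq, hS]
  · rw [hr']; exact deriv_deriv_const_add_smul_exp_affine_mul _ _ _ _ _ _ s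
  · simp [hr, hS]
  · simp [hr, msin_zero]

/-- The magnetic case: explicit solutions of the boundary value problem
`q̈ = 2iβt q̇` on `[0,1]`. -/
theorem statement17 (ν : ℕ) (hν : 1 ≤ ν)
    (β : Matrix (Fin ν) (Fin ν) ℝ) (hskew : βᵀ = -β)
    (t : ℂ) (βC : Mat ν) (hβC : βC = β.map (Complex.ofReal : ℝ → ℂ))
    (hinv : IsUnit (msin (t • βC)))
    (q r : ℝ → Mat ν)
    (hq : q = fun s : ℝ =>
      NormedSpace.exp ((-(Complex.I * t * (1 - (s : ℂ)))) • βC) *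
        msin ((t * (s : ℂ)) • βC) * (msin (t • βC))⁻¹)
    (hr : r = fun s : ℝ =>
      NormedSpace.exp ((Complex.I * t * (s : ℂ)) • βC) *
        msin ((t * (1 - (s : ℂ))) • βC) * (msin (t • βC))⁻¹) :
    (∀ s ∈ Icc (0 : ℝ) 1,
        deriv (deriv q) s = ((2 : ℂ) * Complex.I * t) • (βC * deriv q s)) ∧
      q 0 = 0 ∧ q 1 = 1 ∧
      (∀ s ∈ Icc (0 : ℝ) 1,
        deriv (deriv r) s = ((2 : ℂ) * Complex.I * t) • (βC * deriv r s)) ∧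
      r 0 = 1 ∧ r 1 = 0 :=
  statement17_general ν t βC hinv q r hq hr
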